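/- arXiv:2412.20187 — 2 statements merged into one kernel-verified Lean document; each statement's English description precedes it below -/
import Mathlib

section
/- Let u = u^θ ∂/∂θ + u^φ ∂/∂φ be a C¹ vector field on the sphere S²_a (in spherical coordinates away from the poles) that is a Killing field and satisfies (grad cos φ | u)_g = 0. Then u^φ = 0 and u^θ is a constant c, i.e., u = c ∂/∂θ. -/
open Real Set

/-- Let `u = u¹ ∂/∂θ + u² ∂/∂φ` be a C¹ vector field on the sphere `S²_a` (in spherical
coordinates `(θ, φ)`, away from the poles, metric `diag(a² sin²φ, a²)`, Christoffel symbols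
`Γ¹₁₂ = Γ¹₂₁ = cot φ`, `Γ²₁₁ = -sin φ cos φ`, others zero) that is a Killing field, i.e.
`g^{jk} u^i_{|k} + g^{ik} u^j_{|k} = 0` for all `i, j` where `u^i_{|k} = ∂_k u^i + Γ^i_{kl} u^l`,
and that satisfies `(grad cos φ | u)_g = ∂_φ(cos φ) u² = -sin φ · u² = 0`.
Then `u² = 0` and `u¹` is a constant `c`, i.e. `u = c ∂/∂θ`. -/
theorem stmt13 (a : ℝ) (ha : 0 < a) (u1 u2 : ℝ → ℝ → ℝ)
    (hu1 : Differentiable ℝ (fun p : ℝ × ℝ => u1 p.1 p.2))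
    (hu2 : Differentiable ℝ (fun p : ℝ × ℝ => u2 p.1 p.2))
    -- Killing equation, component (i,j) = (1,1):
    (hK11 : ∀ θ φ, φ ∈ Ioo 0 π →
      2 * (1 / (a ^ 2 * sin φ ^ 2)) *
        (deriv (fun t => u1 t φ) θ + (cos φ / sin φ) * u2 θ φ) = 0)
    -- Killing equation, component (i,j) = (2,2):
    (hK22 : ∀ θ φ, φ ∈ Ioo 0 π →
      2 * (1 / a ^ 2) * deriv (fun s => u2 θ s) φ = 0)
    -- Killing equation, component (i,j) = (1,2):
    (hK12 : ∀ θ φ, φ ∈ Ioo 0 π →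
      (1 / a ^ 2) * (deriv (fun s => u1 θ s) φ + (cos φ / sin φ) * u1 θ φ)
        + (1 / (a ^ 2 * sin φ ^ 2)) *
            (deriv (fun t => u2 t φ) θ - sin φ * cos φ * u1 θ φ) = 0)
    -- `(grad cos φ | u)_g = 0`:
    (horth : ∀ θ φ, φ ∈ Ioo 0 π → -sin φ * u2 θ φ = 0) :
    ∃ c : ℝ, ∀ θ φ, φ ∈ Ioo 0 π → u1 θ φ = c ∧ u2 θ φ = 0 := by

  have hsin : ∀ φ ∈ Ioo (0:ℝ) π, 0 < sin φ := fun φ hφ => Real.sin_pos_of_pos_of_lt_pi hφ.1 hφ.2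
  have hu20 : ∀ θ φ, φ ∈ Ioo 0 π → u2 θ φ = 0 := by
    intro θ φ hφ
    have h := horth θ φ hφ
    have hs := (hsin φ hφ).ne'
    rcases mul_eq_zero.1 h with h' | h'
    · exact absurd (neg_eq_zero.1 h') hs
    · exact h'
  set F : ℝ × ℝ → ℝ := fun p => u1 p.1 p.2 with hF
  have ha2 : (a:ℝ) ≠ 0 := ha.ne'
  -- partial derivative in θ vanishes
  have hder1 : ∀ θ φ, φ ∈ Ioo 0 π → deriv (fun t => u1 t φ) θ = 0 := by
    intro θ φ hφ
    have h := hK11 θ φ hφ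
    rw [hu20 θ φ hφ] at h
    have hs := (hsin φ hφ).ne'
    have hpos : (0:ℝ) < 2 * (1 / (a ^ 2 * sin φ ^ 2)) := by positivity
    have := mul_eq_zero.1 h
    rcases this with h' | h'
    · exact absurd h' hpos.ne'
    · simpa using h'
  -- partial derivative in φ vanishes
  have hder2 : ∀ θ φ, φ ∈ Ioo 0 π → deriv (fun s => u1 θ s) φ = 0 := by
    intro θ φ hφ
    have h := hK12 θ φ hφ
    have hs := (hsin φ hφ).ne'
    have hu2z : (fun t => u2 t φ) = fun _ => (0:ℝ) := by
      funext t; exact hu20 t φ hφ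
    rw [hu2z, deriv_const] at h
    field_simp at h
    have h3 : deriv (fun s => u1 θ s) φ * (a ^ 2 * sin φ ^ 3) = 0 := by linear_combination (a ^ 2 * sin φ) * h
    rcases mul_eq_zero.1 h3 with h' | h'
    · exact h'
    · exfalso
      have : a ^ 2 * sin φ ^ 3 ≠ 0 := by positivity
      exact this h' 
  -- the full derivative of F vanishes
  have hd1 : ∀ θ φ, φ ∈ Ioo 0 π → fderiv ℝ F (θ, φ) (1, 0) = 0 := by
    intro θ φ hφ
    have hc : HasDerivAt (fun t : ℝ => ((t, φ) : ℝ × ℝ)) (1, 0) θ :=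
      (hasDerivAt_id θ).prodMk (hasDerivAt_const θ φ)
    have hcomp := (hu1 (θ, φ)).hasFDerivAt.comp_hasDerivAt θ hc
    rw [← hcomp.deriv]
    exact hder1 θ φ hφ
  have hd2 : ∀ θ φ, φ ∈ Ioo 0 π → fderiv ℝ F (θ, φ) (0, 1) = 0 := by
    intro θ φ hφ
    have hc : HasDerivAt (fun s : ℝ => ((θ, s) : ℝ × ℝ)) (0, 1) φ :=
      (hasDerivAt_const φ θ).prodMk (hasDerivAt_id φ)
    have hcomp := (hu1 (θ, φ)).hasFDerivAt.comp_hasDerivAt φ hc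
    rw [← hcomp.deriv]
    exact hder2 θ φ hφ
  have hfd : ∀ p ∈ (univ ×ˢ Ioo 0 π : Set (ℝ × ℝ)), fderiv ℝ F p = 0 := by
    rintro ⟨θ, φ⟩ ⟨-, hφ⟩
    refine ContinuousLinearMap.ext fun v => ?_
    have hv : v = v.1 • ((1:ℝ), (0:ℝ)) + v.2 • ((0:ℝ), (1:ℝ)) := by
      simp [Prod.ext_iff]
    rw [hv, map_add, map_smul, map_smul, hd1 θ φ hφ, hd2 θ φ hφ]
    simp
  have hconv : Convex ℝ (univ ×ˢ Ioo 0 π : Set (ℝ × ℝ)) :=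
    convex_univ.prod (convex_Ioo 0 π)
  have hconst : ∀ p ∈ (univ ×ˢ Ioo 0 π : Set (ℝ × ℝ)),
      F p = F (0, π / 2) := by
    intro p hp
    have hmem : ((0:ℝ), π / 2) ∈ (univ ×ˢ Ioo 0 π : Set (ℝ × ℝ)) := by
      constructor
      · trivial
      · constructor
        · positivity
        · linarith [Real.pi_pos]
    have hbound : ∀ x ∈ (univ ×ˢ Ioo 0 π : Set (ℝ × ℝ)), ‖fderiv ℝ F x‖ ≤ 0 := by
      intro x hx; rw [hfd x hx]; simp
    have := hconv.norm_image_sub_le_of_norm_fderiv_le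
      (fun x _ => hu1 x) hbound hmem hp
    have h0 : F p - F (0, π / 2) = 0 := by
      have := norm_le_zero_iff.1 (by simpa using this)
      simpa using this
    linarith [h0]
  refine ⟨u1 0 (π / 2), fun θ φ hφ => ⟨?_, hu20 θ φ hφ⟩⟩
  have := hconst (θ, φ) ⟨trivial, hφ⟩
  simpa [hF] using this
end

section
/- On the sphere S²_a, suppose u is a C² Killing vector field such that C u = grad h for some C¹ function h, where C is the Coriolis operator Cu = -2ω cos φ Ku with ω ≠ 0. Then (grad cos φ | u)_g = 0, and consequently u = c ∂/∂θ for some constant c. -/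
open Real Set

lemma pd1 {f : ℝ×ℝ → ℝ} {p : ℝ×ℝ} (hf : DifferentiableAt ℝ f p) :
    HasDerivAt (fun t => f (t, p.2)) (fderiv ℝ f p (1,0)) p.1 := by
  have hc : HasDerivAt (fun t : ℝ => (t, p.2)) ((1:ℝ),(0:ℝ)) p.1 :=
    HasDerivAt.prodMk (hasDerivAt_id p.1) (hasDerivAt_const _ _)
  exact hf.hasFDerivAt.comp_hasDerivAt p.1 hc

lemma pd2 {f : ℝ×ℝ → ℝ} {p : ℝ×ℝ} (hf : DifferentiableAt ℝ f p) :
    HasDerivAt (fun s => f (p.1, s)) (fderiv ℝ f p (0,1)) p.2 := by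
  have hc : HasDerivAt (fun s : ℝ => (p.1, s)) ((0:ℝ),(1:ℝ)) p.2 :=
    HasDerivAt.prodMk (hasDerivAt_const _ _) (hasDerivAt_id p.2)
  exact hf.hasFDerivAt.comp_hasDerivAt p.2 hc

lemma fderiv_eval {f : ℝ×ℝ → ℝ} {p : ℝ×ℝ} (hf : DifferentiableAt ℝ f p) (v : ℝ×ℝ) :
    fderiv ℝ f p v = v.1 * fderiv ℝ f p (1,0) + v.2 * fderiv ℝ f p (0,1) := by
  have hv : v = v.1 • ((1:ℝ),(0:ℝ)) + v.2 • ((0:ℝ),(1:ℝ)) := by ext <;> simp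
  rw [hv, map_add, map_smul, map_smul]; simp [smul_eq_mul]

lemma clairaut {H F G : ℝ×ℝ → ℝ} {s : Set (ℝ×ℝ)} (hs : IsOpen s) {p : ℝ×ℝ} (hp : p ∈ s)
    (hH : Differentiable ℝ H) (hF : Differentiable ℝ F) (hG : Differentiable ℝ G)
    (h1 : ∀ q ∈ s, fderiv ℝ H q (1,0) = F q)
    (h2 : ∀ q ∈ s, fderiv ℝ H q (0,1) = G q) :
    fderiv ℝ F p (0,1) = fderiv ℝ G p (1,0) := by
  set f' : ℝ×ℝ → (ℝ×ℝ →L[ℝ] ℝ) := fun q =>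
    F q • ContinuousLinearMap.fst ℝ ℝ ℝ + G q • ContinuousLinearMap.snd ℝ ℝ ℝ with hf'def
  have hHd : ∀ q ∈ s, HasFDerivAt H (f' q) q := by
    intro q hq
    have heq : f' q = fderiv ℝ H q := by
      apply ContinuousLinearMap.ext
      intro v
      rw [fderiv_eval (hH q) v, h1 q hq, h2 q hq]
      simp [hf'def, smul_eq_mul]
      ring
    rw [heq]; exact (hH q).hasFDerivAt
  have hf'' : HasFDerivAt f' ((fderiv ℝ F p).smulRight (ContinuousLinearMap.fst ℝ ℝ ℝ)
      + (fderiv ℝ G p).smulRight (ContinuousLinearMap.snd ℝ ℝ ℝ)) p :=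
    ((hF p).hasFDerivAt.smul_const (ContinuousLinearMap.fst ℝ ℝ ℝ)).add ((hG p).hasFDerivAt.smul_const (ContinuousLinearMap.snd ℝ ℝ ℝ))
  have hev : ∀ᶠ q in nhds p, HasFDerivAt H (f' q) q := by
    filter_upwards [hs.mem_nhds hp] with q hq using hHd q hq
  have key := second_derivative_symmetric_of_eventually hev hf'' ((0:ℝ),(1:ℝ)) ((1:ℝ),(0:ℝ))
  simpa [smul_eq_mul] using key

/-- On the sphere `S²_a` (spherical coordinates `(θ, φ)` away from the poles, metric
`diag(a² sin²φ, a²)`), suppose `u = u¹ ∂/∂θ + u² ∂/∂φ` is a C² Killing vector field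
(i.e. `g^{jk} u^i_{|k} + g^{ik} u^j_{|k} = 0` for all `i, j`, where
`u^i_{|k} = ∂_k u^i + Γ^i_{kl} u^l` with `Γ¹₁₂ = Γ¹₂₁ = cot φ`, `Γ²₁₁ = -sin φ cos φ`,
others zero) such that `C u = grad h` for some C¹ function `h`, where `C` is the Coriolis
operator `Cu = -2ω cos φ Ku`, `ω ≠ 0`, and `Ku = (u²/sin φ) ∂/∂θ - sin φ u¹ ∂/∂φ`.
Then `(grad cos φ | u)_g = -sin φ · u² = 0` and consequently `u = c ∂/∂θ` for some
constant `c`. -/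
theorem stmt19 (a ω : ℝ) (ha : 0 < a) (hω : ω ≠ 0) (u1 u2 h : ℝ → ℝ → ℝ)
    (hu : ContDiff ℝ 2 (fun p : ℝ × ℝ => (u1 p.1 p.2, u2 p.1 p.2)))
    (hh : ContDiff ℝ 1 (fun p : ℝ × ℝ => h p.1 p.2))
    -- Killing equation, component (i,j) = (1,1):
    (hK11 : ∀ θ φ, φ ∈ Ioo 0 π →
      2 * (1 / (a ^ 2 * sin φ ^ 2)) *
        (deriv (fun t => u1 t φ) θ + (cos φ / sin φ) * u2 θ φ) = 0)
    -- Killing equation, component (i,j) = (2,2):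
    (hK22 : ∀ θ φ, φ ∈ Ioo 0 π →
      2 * (1 / a ^ 2) * deriv (fun s => u2 θ s) φ = 0)
    -- Killing equation, component (i,j) = (1,2):
    (hK12 : ∀ θ φ, φ ∈ Ioo 0 π →
      (1 / a ^ 2) * (deriv (fun s => u1 θ s) φ + (cos φ / sin φ) * u1 θ φ)
        + (1 / (a ^ 2 * sin φ ^ 2)) *
            (deriv (fun t => u2 t φ) θ - sin φ * cos φ * u1 θ φ) = 0)
    -- `C u = grad h`, θ-component: `(Cu)^θ = -2ω cos φ · u²/sin φ = g^{11} ∂_θ h`: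
    (hC1 : ∀ θ φ, φ ∈ Ioo 0 π →
      (-2 * ω * cos φ) * (u2 θ φ / sin φ)
        = (1 / (a ^ 2 * sin φ ^ 2)) * deriv (fun t => h t φ) θ)
    -- `C u = grad h`, φ-component: `(Cu)^φ = -2ω cos φ · (-sin φ u¹) = g^{22} ∂_φ h`:
    (hC2 : ∀ θ φ, φ ∈ Ioo 0 π →
      (-2 * ω * cos φ) * (-(sin φ) * u1 θ φ)
        = (1 / a ^ 2) * deriv (fun s => h θ s) φ) :
    (∀ θ φ, φ ∈ Ioo 0 π → -sin φ * u2 θ φ = 0)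
      ∧ ∃ c : ℝ, ∀ θ φ, φ ∈ Ioo 0 π → u1 θ φ = c ∧ u2 θ φ = 0 := by
  have ha' : a ≠ 0 := ne_of_gt ha
  have hU1 : Differentiable ℝ (fun p : ℝ×ℝ => u1 p.1 p.2) :=
    hu.fst.differentiable (by norm_num)
  have hU2 : Differentiable ℝ (fun p : ℝ×ℝ => u2 p.1 p.2) :=
    hu.snd.differentiable (by norm_num)
  have hH : Differentiable ℝ (fun p : ℝ×ℝ => h p.1 p.2) := hh.differentiable (by norm_num)
  set S : Set (ℝ×ℝ) := univ ×ˢ Ioo 0 π with hSdef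
  have hSopen : IsOpen S := isOpen_univ.prod isOpen_Ioo
  -- the functions F = ∂θ h, G = ∂φ h on S
  set F : ℝ×ℝ → ℝ := fun p => -(2*ω*a^2) * ((sin p.2 * cos p.2) * u2 p.1 p.2) with hFdef
  set G : ℝ×ℝ → ℝ := fun p => (2*ω*a^2) * ((sin p.2 * cos p.2) * u1 p.1 p.2) with hGdef
  have hF : Differentiable ℝ F := by
    apply Differentiable.const_mul
    exact ((differentiable_snd.sin).mul (differentiable_snd.cos)).mul hU2
  have hG : Differentiable ℝ G := by
    apply Differentiable.const_mul
    exact ((differentiable_snd.sin).mul (differentiable_snd.cos)).mul hU1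
  have hmemS : ∀ {θ φ : ℝ}, φ ∈ Ioo 0 π → (θ, φ) ∈ S := by
    intro θ φ hφ; exact ⟨trivial, hφ⟩
  -- partial derivatives of h on S
  have h1 : ∀ q ∈ S, fderiv ℝ (fun p : ℝ×ℝ => h p.1 p.2) q (1,0) = F q := by
    rintro ⟨θ, φ⟩ hq
    have hφ : φ ∈ Ioo 0 π := hq.2
    have hs : sin φ ≠ 0 := ne_of_gt (sin_pos_of_pos_of_lt_pi hφ.1 hφ.2)
    have hD : HasDerivAt (fun t => h t φ)
        (fderiv ℝ (fun p : ℝ×ℝ => h p.1 p.2) (θ, φ) (1,0)) θ := pd1 (p := (θ,φ)) (hH _)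
    have hc := hC1 θ φ hφ
    rw [hD.deriv] at hc
    have : F (θ, φ) = -(2*ω*a^2) * ((sin φ * cos φ) * u2 θ φ) := rfl
    rw [this]
    apply mul_right_cancel₀ hs
    field_simp at hc
    linear_combination -(sin φ) * hc
  have h2 : ∀ q ∈ S, fderiv ℝ (fun p : ℝ×ℝ => h p.1 p.2) q (0,1) = G q := by
    rintro ⟨θ, φ⟩ hq
    have hφ : φ ∈ Ioo 0 π := hq.2
    have hs : sin φ ≠ 0 := ne_of_gt (sin_pos_of_pos_of_lt_pi hφ.1 hφ.2)
    have hD : HasDerivAt (fun s => h θ s)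
        (fderiv ℝ (fun p : ℝ×ℝ => h p.1 p.2) (θ, φ) (0,1)) φ := pd2 (p := (θ,φ)) (hH _)
    have hc := hC2 θ φ hφ
    rw [hD.deriv] at hc
    have : G (θ, φ) = (2*ω*a^2) * ((sin φ * cos φ) * u1 θ φ) := rfl
    rw [this]
    field_simp at hc
    linear_combination -hc
  -- u2 vanishes on the strip
  have hu2 : ∀ θ φ, φ ∈ Ioo 0 π → u2 θ φ = 0 := by
    intro θ φ hφ
    have hs : sin φ ≠ 0 := ne_of_gt (sin_pos_of_pos_of_lt_pi hφ.1 hφ.2)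
    have key := clairaut (p := (θ, φ)) hSopen (hmemS hφ) hH hF hG h1 h2
    -- compute fderiv F (θ,φ) (0,1)
    have hd2 : HasDerivAt (fun s => u2 θ s)
        (fderiv ℝ (fun p : ℝ×ℝ => u2 p.1 p.2) (θ, φ) (0,1)) φ := pd2 (p := (θ,φ)) (hU2 _)
    have hd2z : fderiv ℝ (fun p : ℝ×ℝ => u2 p.1 p.2) (θ, φ) (0,1) = 0 := by
      have hk := hK22 θ φ hφ
      rw [hd2.deriv] at hk
      field_simp at hk
      linarith
    have hFexp : HasDerivAt (fun s => F (θ, s))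
        (-(2*ω*a^2) * ((cos φ * cos φ + sin φ * -sin φ) * u2 θ φ
          + (sin φ * cos φ) * fderiv ℝ (fun p : ℝ×ℝ => u2 p.1 p.2) (θ, φ) (0,1))) φ :=
      (((Real.hasDerivAt_sin φ).mul (Real.hasDerivAt_cos φ)).mul hd2).const_mul (-(2*ω*a^2))
    have hFp : HasDerivAt (fun s => F (θ, s)) (fderiv ℝ F (θ, φ) (0,1)) φ := pd2 (p := (θ,φ)) (hF _)
    have hFval := hFp.unique hFexp
    -- compute fderiv G (θ,φ) (1,0)
    have hd1 : HasDerivAt (fun t => u1 t φ)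
        (fderiv ℝ (fun p : ℝ×ℝ => u1 p.1 p.2) (θ, φ) (1,0)) θ := pd1 (p := (θ,φ)) (hU1 _)
    have hd1v : sin φ * fderiv ℝ (fun p : ℝ×ℝ => u1 p.1 p.2) (θ, φ) (1,0)
        = -(cos φ * u2 θ φ) := by
      have hk := hK11 θ φ hφ
      rw [hd1.deriv] at hk
      field_simp at hk
      linear_combination hk/2
    have hGexp : HasDerivAt (fun t => G (t, φ))
        ((2*ω*a^2) * ((sin φ * cos φ)
          * fderiv ℝ (fun p : ℝ×ℝ => u1 p.1 p.2) (θ, φ) (1,0))) θ :=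
      (hd1.const_mul (sin φ * cos φ)).const_mul (2*ω*a^2)
    have hGp : HasDerivAt (fun t => G (t, φ)) (fderiv ℝ G (θ, φ) (1,0)) θ := pd1 (p := (θ,φ)) (hG _)
    have hGval := hGp.unique hGexp
    have E : (2*ω*a^2) * ((sin φ * cos φ)
          * fderiv ℝ (fun p : ℝ×ℝ => u1 p.1 p.2) (θ, φ) (1,0))
        = -(2*ω*a^2) * ((cos φ * cos φ + sin φ * -sin φ) * u2 θ φ
          + (sin φ * cos φ) * fderiv ℝ (fun p : ℝ×ℝ => u2 p.1 p.2) (θ, φ) (0,1)) := by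
      rw [← hGval, ← hFval]; exact key.symm
    rw [hd2z] at E
    have hz : 2*ω*a^2*(sin φ^2 * u2 θ φ) = 0 := by
      linear_combination (-1 : ℝ) * E + (2*ω*a^2*cos φ) * hd1v
    have h2ω : (2*ω*a^2 : ℝ) ≠ 0 := mul_ne_zero (mul_ne_zero two_ne_zero hω) (pow_ne_zero 2 ha')
    have hz2 := (mul_eq_zero.mp hz).resolve_left h2ω
    exact (mul_eq_zero.mp hz2).resolve_left (pow_ne_zero 2 hs)
  refine ⟨fun θ φ hφ => by rw [hu2 θ φ hφ]; ring, ?_⟩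
  have hπ2 : (π/2 : ℝ) ∈ Ioo 0 π := ⟨by positivity, half_lt_self Real.pi_pos⟩
  have hfd0 : ∀ p ∈ S, fderiv ℝ (fun q : ℝ×ℝ => u1 q.1 q.2) p = 0 := by
    rintro ⟨θ, φ⟩ hq
    have hφ : φ ∈ Ioo 0 π := hq.2
    have hs : sin φ ≠ 0 := ne_of_gt (sin_pos_of_pos_of_lt_pi hφ.1 hφ.2)
    have hd1 : HasDerivAt (fun t => u1 t φ)
        (fderiv ℝ (fun p : ℝ×ℝ => u1 p.1 p.2) (θ, φ) (1,0)) θ := pd1 (p := (θ,φ)) (hU1 _)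
    have hd1z : fderiv ℝ (fun p : ℝ×ℝ => u1 p.1 p.2) (θ, φ) (1,0) = 0 := by
      have hk := hK11 θ φ hφ
      rw [hd1.deriv, hu2 θ φ hφ] at hk
      field_simp at hk
      have hsX : sin φ * fderiv ℝ (fun p : ℝ×ℝ => u1 p.1 p.2) (θ, φ) (1,0) = 0 := by
        linear_combination hk/2
      exact (mul_eq_zero.mp hsX).resolve_left hs
    have he : HasDerivAt (fun s => u1 θ s)
        (fderiv ℝ (fun p : ℝ×ℝ => u1 p.1 p.2) (θ, φ) (0,1)) φ := pd2 (p := (θ,φ)) (hU1 _)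
    have hez : fderiv ℝ (fun p : ℝ×ℝ => u1 p.1 p.2) (θ, φ) (0,1) = 0 := by
      have hk := hK12 θ φ hφ
      have hzero : (fun t => u2 t φ) = fun _ => (0:ℝ) := funext fun t => hu2 t φ hφ
      rw [he.deriv, hzero, deriv_const] at hk
      field_simp at hk
      have hsq : fderiv ℝ (fun p : ℝ×ℝ => u1 p.1 p.2) (θ, φ) (0,1) * (a^2 * sin φ ^ 3) = 0 := by
        linear_combination a^2 * sin φ * hk
      exact (mul_eq_zero.mp hsq).resolve_right
        (mul_ne_zero (pow_ne_zero 2 ha') (pow_ne_zero 3 hs))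
    apply ContinuousLinearMap.ext
    intro v
    rw [fderiv_eval (hU1 _) v, hd1z, hez]
    simp
  have hconv : Convex ℝ S := convex_univ.prod (convex_Ioo 0 π)
  refine ⟨u1 0 (π/2), fun θ φ hφ => ⟨?_, hu2 θ φ hφ⟩⟩
  have hdo : DifferentiableOn ℝ (fun q : ℝ×ℝ => u1 q.1 q.2) S := hU1.differentiableOn
  have hb : ∀ p ∈ S, ‖fderivWithin ℝ (fun q : ℝ×ℝ => u1 q.1 q.2) S p‖ ≤ 0 := by
    intro p hp
    rw [fderivWithin_of_isOpen hSopen hp, hfd0 p hp]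
    simp
  have hle := hconv.norm_image_sub_le_of_norm_fderivWithin_le hdo hb
    (hmemS (θ := 0) hπ2) (hmemS (θ := θ) hφ)
  rw [zero_mul] at hle
  exact sub_eq_zero.mp (norm_le_zero_iff.mp hle)
end
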